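/- arXiv:1505.04101 — 9 statements merged into one kernel-verified Lean document; each statement's English description precedes it below -/
import Mathlib

section
/- Let T > 0 be finite and let η₀, η₁ : [0,T) → [0,∞) be locally integrable. Assume there exist nonnegative constants A₀, A₁, B₀, B₁ and locally integrable functions φ₀, φ₁ : [0,T) → ℝ such that for each i ∈ {0,1} the inequality η_i(t) ≤ A_i·∫₀ᵗ η_i(s) ds + B_i·∫₀ᵗ η_{1−i}(s) ds + φ_i(t) holds for almost every t ∈ [0,T). If φ₀ and φ₁ are bounded on [0,T), then η₀ and η₁ are essentially bounded on [0,T), i.e., there exists M such that η_i(t) ≤ M for almost every t ∈ [0,T) and i ∈ {0,1}. -/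
open MeasureTheory Set

/-- Coupled Gronwall-type lemma for a system of two integral inequalities
(Lemma 2.2 of the paper). -/
theorem coupled_gronwall_bounded
    (T : ℝ) (hT : 0 < T)
    (η : Fin 2 → ℝ → ℝ) (A B : Fin 2 → ℝ) (φ : Fin 2 → ℝ → ℝ)
    (hη_nonneg : ∀ i : Fin 2, ∀ t ∈ Set.Ico (0:ℝ) T, 0 ≤ η i t)
    (hη_int : ∀ i : Fin 2, ∀ t ∈ Set.Ico (0:ℝ) T, IntegrableOn (η i) (Set.Icc 0 t))
    (hφ_int : ∀ i : Fin 2, ∀ t ∈ Set.Ico (0:ℝ) T, IntegrableOn (φ i) (Set.Icc 0 t))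
    (hA : ∀ i : Fin 2, 0 ≤ A i) (hB : ∀ i : Fin 2, 0 ≤ B i)
    (hineq : ∀ i : Fin 2, ∀ᵐ t ∂(volume.restrict (Set.Ico (0:ℝ) T)),
      η i t ≤ A i * (∫ s in (0:ℝ)..t, η i s) + B i * (∫ s in (0:ℝ)..t, η (1 - i) s) + φ i t)
    (hφ_bdd : ∃ Cφ : ℝ, ∀ i : Fin 2, ∀ t ∈ Set.Ico (0:ℝ) T, |φ i t| ≤ Cφ) :
    ∃ M : ℝ, ∀ i : Fin 2, ∀ᵐ t ∂(volume.restrict (Set.Ico (0:ℝ) T)), η i t ≤ M := by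
  obtain ⟨Cφ, hCφ⟩ := hφ_bdd
  have hCφ0 : 0 ≤ Cφ := (abs_nonneg _).trans (hCφ 0 0 ⟨le_refl 0, hT⟩)
  set C : ℝ := A 0 + A 1 + B 0 + B 1 with hC
  have hC0 : 0 ≤ C := by
    have := hA 0; have := hA 1; have := hB 0; have := hB 1; positivity
  set g : ℝ → ℝ := fun t => ∫ s in (0:ℝ)..t, (η 0 s + η 1 s) with hg_def
  -- interval integrability
  have hii : ∀ (i : Fin 2) (t : ℝ), t ∈ Set.Ico (0:ℝ) T →
      IntervalIntegrable (η i) volume 0 t := by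
    intro i t ht
    have := (hη_int i t ht)
    rw [show Icc (0:ℝ) t = uIcc 0 t by rw [uIcc_of_le ht.1]] at this
    exact this.intervalIntegrable
  have hii2 : ∀ (t : ℝ), t ∈ Set.Ico (0:ℝ) T →
      IntervalIntegrable (fun s => η 0 s + η 1 s) volume 0 t :=
    fun t ht => (hii 0 t ht).add (hii 1 t ht)
  have hg_nonneg : ∀ t ∈ Set.Ico (0:ℝ) T, 0 ≤ g t := by
    intro t ht
    exact intervalIntegral.integral_nonneg ht.1 fun u hu =>
      add_nonneg (hη_nonneg 0 u ⟨hu.1, lt_of_le_of_lt hu.2 ht.2⟩)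
        (hη_nonneg 1 u ⟨hu.1, lt_of_le_of_lt hu.2 ht.2⟩)
  -- step: a.e. pointwise bound by C * g + Cφ
  have hstep : ∀ i : Fin 2, ∀ᵐ t ∂(volume.restrict (Set.Ico (0:ℝ) T)),
      η i t ≤ C * g t + Cφ := by
    intro i
    have hi : i = 0 ∨ i = 1 := by omega
    have h4 := hA 0; have h5 := hA 1; have h6 := hB 0; have h7 := hB 1
    filter_upwards [hineq i, ae_restrict_mem measurableSet_Ico] with t h1 ht
    have hI : ∀ j : Fin 2, 0 ≤ ∫ s in (0:ℝ)..t, η j s := fun j =>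
      intervalIntegral.integral_nonneg ht.1 fun u hu =>
        hη_nonneg j u ⟨hu.1, lt_of_le_of_lt hu.2 ht.2⟩
    have hsum : (∫ s in (0:ℝ)..t, η i s) + (∫ s in (0:ℝ)..t, η (1 - i) s) = g t := by
      rcases hi with rfl | rfl
      · rw [show ((1:Fin 2) - 0) = 1 from rfl]
        exact (intervalIntegral.integral_add (hii 0 t ht) (hii 1 t ht)).symm
      · rw [show ((1:Fin 2) - 1) = 0 from rfl, add_comm]
        exact (intervalIntegral.integral_add (hii 0 t ht) (hii 1 t ht)).symm
    have hAC : A i ≤ C := by rcases hi with rfl | rfl <;> simp only [hC] <;> linarith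
    have hBC : B i ≤ C := by rcases hi with rfl | rfl <;> simp only [hC] <;> linarith
    have hφle : φ i t ≤ Cφ := (le_abs_self _).trans (hCφ i t ht)
    have e1 : A i * (∫ s in (0:ℝ)..t, η i s) ≤ C * (∫ s in (0:ℝ)..t, η i s) :=
      mul_le_mul_of_nonneg_right hAC (hI i)
    have e2 : B i * (∫ s in (0:ℝ)..t, η (1 - i) s) ≤ C * (∫ s in (0:ℝ)..t, η (1 - i) s) :=
      mul_le_mul_of_nonneg_right hBC (hI (1 - i))
    have e3 : C * (∫ s in (0:ℝ)..t, η i s) + C * (∫ s in (0:ℝ)..t, η (1 - i) s)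
        = C * g t := by rw [← hsum]; ring
    linarith
  -- a.e. bound on the sum
  have hsum_ae : ∀ᵐ t ∂(volume.restrict (Set.Ico (0:ℝ) T)),
      η 0 t + η 1 t ≤ 2 * C * g t + 2 * Cφ := by
    filter_upwards [hstep 0, hstep 1] with t h0 h1
    linarith
  -- deterministic Gronwall bound on g
  have hGbound : ∀ t ∈ Set.Ico (0:ℝ) T, g t ≤ gronwallBound 0 (2 * C) (2 * Cφ) t := by
    intro t ht
    set t₁ : ℝ := (t + T) / 2 with ht₁def
    have htt₁ : t < t₁ := by simp only [ht₁def]; linarith [ht.2]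
    have ht₁T : t₁ < T := by simp only [ht₁def]; linarith [ht.2]
    have ht₁0 : (0:ℝ) ≤ t₁ := le_trans ht.1 htt₁.le
    have ht₁mem : t₁ ∈ Set.Ico (0:ℝ) T := ⟨ht₁0, ht₁T⟩
    have hgcont : ContinuousOn g (Icc 0 t₁) := by
      have : IntegrableOn (fun s => η 0 s + η 1 s) (uIcc 0 t₁) := by
        rw [uIcc_of_le ht₁0]
        exact (hη_int 0 t₁ ht₁mem).add (hη_int 1 t₁ ht₁mem)
      have h := intervalIntegral.continuousOn_primitive_interval this
      rwa [uIcc_of_le ht₁0] at h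
    set h₀ : ℝ → ℝ := fun s => 2 * C * g s + 2 * Cφ with hh₀def
    have hhcont : ContinuousOn h₀ (Icc 0 t₁) :=
      (continuousOn_const.mul hgcont).add continuousOn_const
    set G : ℝ → ℝ := fun u => ∫ s in (0:ℝ)..u, h₀ s with hGdef
    have hhint : ∀ u ∈ Icc (0:ℝ) t₁, IntervalIntegrable h₀ volume 0 u := by
      intro u hu
      apply ContinuousOn.intervalIntegrable
      rw [uIcc_of_le hu.1]
      exact hhcont.mono (Icc_subset_Icc le_rfl hu.2)
    have hsub : ∀ u ∈ Icc (0:ℝ) t₁, Icc (0:ℝ) u ⊆ Set.Ico (0:ℝ) T := fun u hu =>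
      Icc_subset_Ico_right (lt_of_le_of_lt hu.2 ht₁T)
    have hgG : ∀ u ∈ Icc (0:ℝ) t₁, g u ≤ G u := by
      intro u hu
      apply intervalIntegral.integral_mono_ae_restrict hu.1 (hii2 u ⟨hu.1, lt_of_le_of_lt hu.2 ht₁T⟩)
        (hhint u hu)
      exact ae_restrict_of_ae_restrict_of_subset (hsub u hu) hsum_ae
    have hGnonneg : ∀ u ∈ Icc (0:ℝ) t₁, 0 ≤ G u := by
      intro u hu
      apply intervalIntegral.integral_nonneg hu.1
      intro v hv
      have hvmem : v ∈ Set.Ico (0:ℝ) T := hsub u hu hv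
      have := hg_nonneg v hvmem
      simp only [hh₀def]; positivity
    have hGcont : ContinuousOn G (Icc 0 t₁) := by
      have : IntegrableOn h₀ (uIcc 0 t₁) := by
        rw [uIcc_of_le ht₁0]; exact hhcont.integrableOn_Icc
      have h := intervalIntegral.continuousOn_primitive_interval this
      rwa [uIcc_of_le ht₁0] at h
    have hderiv : ∀ u ∈ Ico (0:ℝ) t, HasDerivWithinAt G (h₀ u) (Ici u) u := by
      intro u hu
      have humem : u ∈ Icc (0:ℝ) t₁ := ⟨hu.1, le_of_lt (lt_trans hu.2 htt₁)⟩
      have hmem : Icc (0:ℝ) t₁ ∈ nhdsWithin u (Ici u) := by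
        have h1 : Iio t₁ ∈ nhdsWithin u (Ici u) :=
          nhdsWithin_le_nhds (Iio_mem_nhds (lt_of_lt_of_le (lt_trans hu.2 htt₁) le_rfl))
        have h2 : Ici u ∈ nhdsWithin u (Ici u) := self_mem_nhdsWithin
        filter_upwards [h1, h2] with v hv1 hv2
        exact ⟨le_trans hu.1 hv2, le_of_lt hv1⟩
      have hmem' : Icc (0:ℝ) t₁ ∈ nhdsWithin u (Ioi u) :=
        nhdsWithin_mono u Ioi_subset_Ici_self hmem
      exact intervalIntegral.integral_hasDerivWithinAt_right (t := Ioi u) (hhint u humem)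
        ⟨Icc 0 t₁, hmem', (hhcont.aestronglyMeasurable measurableSet_Icc)⟩
        ((hhcont u humem).mono_of_mem_nhdsWithin hmem')
    have hbound : ∀ u ∈ Ico (0:ℝ) t, ‖h₀ u‖ ≤ 2 * C * ‖G u‖ + 2 * Cφ := by
      intro u hu
      have humem : u ∈ Icc (0:ℝ) t₁ := ⟨hu.1, le_of_lt (lt_trans hu.2 htt₁)⟩
      have h1 : g u ≤ G u := hgG u humem
      have h2 : 0 ≤ G u := hGnonneg u humem
      have h3 : 0 ≤ g u := hg_nonneg u ⟨hu.1, lt_trans hu.2 ht.2⟩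
      rw [Real.norm_of_nonneg h2, Real.norm_of_nonneg (by simp only [hh₀def]; positivity)]
      simp only [hh₀def]
      nlinarith
    have hmain := norm_le_gronwallBound_of_norm_deriv_right_le
      (f := G) (f' := h₀) (δ := 0) (K := 2 * C) (ε := 2 * Cφ) (a := 0) (b := t)
      (hGcont.mono (Icc_subset_Icc le_rfl htt₁.le)) hderiv
      (by simp [hGdef]) hbound t ⟨ht.1, le_rfl⟩
    rw [sub_zero] at hmain
    calc g t ≤ G t := hgG t ⟨ht.1, htt₁.le⟩
      _ ≤ ‖G t‖ := le_abs_self _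
      _ ≤ gronwallBound 0 (2 * C) (2 * Cφ) t := hmain
  -- monotonicity of the Gronwall bound up to T
  have hmono : ∀ t ∈ Set.Ico (0:ℝ) T,
      gronwallBound 0 (2 * C) (2 * Cφ) t ≤ gronwallBound 0 (2 * C) (2 * Cφ) T := by
    intro t ht
    rcases eq_or_ne (2 * C) 0 with hK | hK
    · rw [hK, gronwallBound_K0]
      have : 2 * Cφ * t ≤ 2 * Cφ * T :=
        mul_le_mul_of_nonneg_left ht.2.le (by positivity)
      simpa using this
    · rw [gronwallBound_of_K_ne_0 hK]
      have hKpos : 0 < 2 * C := lt_of_le_of_ne (by positivity) (Ne.symm hK)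
      have hexp : Real.exp (2 * C * t) ≤ Real.exp (2 * C * T) :=
        Real.exp_le_exp.2 (mul_le_mul_of_nonneg_left ht.2.le hKpos.le)
      have hdiv : 0 ≤ 2 * Cφ / (2 * C) := by positivity
      simp only [zero_mul, zero_add]
      exact mul_le_mul_of_nonneg_left (by linarith) hdiv
  refine ⟨C * gronwallBound 0 (2 * C) (2 * Cφ) T + Cφ, fun i => ?_⟩
  filter_upwards [hstep i, ae_restrict_mem measurableSet_Ico] with t h1 ht
  have h2 : g t ≤ gronwallBound 0 (2 * C) (2 * Cφ) T :=
    (hGbound t ht).trans (hmono t ht)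
  nlinarith [mul_le_mul_of_nonneg_left h2 hC0]
end

section
/- Let L > 0 and let g : ℝ → ℝ be Lipschitz with Lipschitz constant L, vanish outside the interval [−1,1], and satisfy ∫_{−1}^{1} g(z) dz = 0. Set M = sup_{z∈ℝ} |g(z)| and M⁺ = sup_{z∈ℝ} g(z). Then M⁺ ≥ M²/(2L). In particular, if g is not identically zero then M⁺ > 0. -/
/-!
Let `z₀` be any point and `m = |g z₀|`, `r = m / L`. By the Lipschitz bound `g` has no zero
in `(z₀ - r, z₀ + r)`, so this interval lies in the support `[-1, 1]`; in particular `r ≤ 1`,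
i.e. `m ≤ L`. If `g z₀ > 0` this gives `m² / (2L) ≤ m / 2 ≤ sup g`. If `g z₀ = -m < 0`, then
`g` lies below the tent `-m + L |z - z₀|` on `[z₀ - r, z₀ + r]`, whose integral is `-m² / L`,
and below `sup g ≥ 0` on the rest of `[-1, 1]`; zero mean then forces `m² / L ≤ 2 sup g`.
-/

open MeasureTheory Set

theorem intervalIntegral.integral_abs_sub_center (c : ℝ) {r : ℝ} (hr : 0 ≤ r) :
    ∫ x in c - r..c + r, |x - c| = r ^ 2 := by
  have hright : ∫ x in c..c + r, |x - c| = r ^ 2 / 2 := by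
    rw [integral_of_le (by linarith), ← uIoc_of_le (by linarith)]
    simpa [abs_of_nonneg hr, one_add_one_eq_two] using
      integral_pow_abs_sub_uIoc (a := c) (b := c + r) 1
  have hleft : ∫ x in c - r..c, |x - c| = r ^ 2 / 2 := by
    rw [integral_symm, integral_of_ge (by linarith), ← uIoc_of_ge (by linarith)]
    simpa [abs_of_nonneg hr, one_add_one_eq_two] using
      integral_pow_abs_sub_uIoc (a := c) (b := c - r) 1
  have hint : ∀ a b : ℝ, IntervalIntegrable (fun x => |x - c|) volume a b := fun a b =>
    (continuous_id.sub continuous_const).abs.intervalIntegrable a b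
  rw [← integral_add_adjacent_intervals (hint _ c) (hint _ _), hleft, hright]
  ring

theorem intervalIntegral.integral_le_mul_add_integral_of_le {g : ℝ → ℝ} {S a b c d : ℝ}
    (hg : ∀ u v, IntervalIntegrable g volume u v) (hca : c ≤ a) (hab : a ≤ b) (hbd : b ≤ d)
    (hS : ∀ z ∈ Icc c d, g z ≤ S) :
    ∫ z in c..d, g z ≤ S * (d - c - (b - a)) + ∫ z in a..b, g z := by
  have hle : ∀ {u v}, c ≤ u → v ≤ d → u ≤ v → ∫ z in u..v, g z ≤ S * (v - u) :=
    fun {u v} hu hv huv => by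
      simpa [mul_comm] using integral_mono_on huv (hg u v) intervalIntegrable_const
        fun z hz => hS z ⟨hu.trans hz.1, hz.2.trans hv⟩
  rw [← integral_add_adjacent_intervals (hg c a) (hg a d),
    ← integral_add_adjacent_intervals (hg a b) (hg b d)]
  linarith [hle le_rfl (hab.trans hbd) hca, hle (hca.trans hab) le_rfl hbd]

section Lipschitz

variable {g : ℝ → ℝ} {L : ℝ}

theorem continuous_of_abs_sub_le_mul (hLip : ∀ x y, |g x - g y| ≤ L * |x - y|) : Continuous g :=
  (LipschitzWith.of_dist_le' hLip).continuous

theorem ne_zero_of_mul_abs_sub_lt (hLip : ∀ x y, |g x - g y| ≤ L * |x - y|) {x z₀ : ℝ}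
    (h : L * |x - z₀| < |g z₀|) : g x ≠ 0 := by
  intro hx
  have := hLip x z₀
  rw [hx, zero_sub, abs_neg] at this
  linarith

theorem Icc_subset_of_abs_sub_le_mul (hL : 0 < L)
    (hLip : ∀ x y, |g x - g y| ≤ L * |x - y|) {s : Set ℝ} (hs : IsClosed s)
    (hsupp : ∀ z ∉ s, g z = 0) {z₀ : ℝ} (h₀ : g z₀ ≠ 0) :
    Icc (z₀ - |g z₀| / L) (z₀ + |g z₀| / L) ⊆ s := by
  have hr : 0 < |g z₀| / L := div_pos (abs_pos.2 h₀) hL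
  rw [← closure_Ioo (by linarith)]
  refine closure_minimal (fun x hx => not_not.1 fun hxs => ?_) hs
  have hdist : |x - z₀| < |g z₀| / L :=
    abs_sub_lt_iff.2 ⟨by linarith [hx.2], by linarith [hx.1]⟩
  exact ne_zero_of_mul_abs_sub_lt hLip (by rwa [lt_div_iff₀' hL] at hdist) (hsupp x hxs)

theorem integral_le_of_abs_sub_le_mul (hLip : ∀ x y, |g x - g y| ≤ L * |x - y|) (z₀ : ℝ)
    {r : ℝ} (hr : 0 ≤ r) : ∫ z in z₀ - r..z₀ + r, g z ≤ 2 * r * g z₀ + L * r ^ 2 := by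
  have htent : ∀ z, g z ≤ g z₀ + L * |z - z₀| := fun z => by
    linarith [le_abs_self (g z - g z₀), hLip z z₀]
  have hcont : Continuous fun z => L * |z - z₀| := by fun_prop
  calc ∫ z in z₀ - r..z₀ + r, g z
      ≤ ∫ z in z₀ - r..z₀ + r, (g z₀ + L * |z - z₀|) :=
        intervalIntegral.integral_mono_on (by linarith)
          ((continuous_of_abs_sub_le_mul hLip).intervalIntegrable _ _)
          (intervalIntegrable_const.add (hcont.intervalIntegrable _ _)) fun z _ => htent z
    _ = 2 * r * g z₀ + L * r ^ 2 := by
        rw [intervalIntegral.integral_add intervalIntegrable_const (hcont.intervalIntegrable _ _),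
          intervalIntegral.integral_const, intervalIntegral.integral_const_mul,
          intervalIntegral.integral_abs_sub_center z₀ hr, smul_eq_mul]
        ring

theorem sq_abs_div_le_iSup (hL : 0 < L) (hLip : ∀ x y, |g x - g y| ≤ L * |x - y|)
    (hsupp : ∀ z ∉ Icc (-1 : ℝ) 1, g z = 0)
    (hint : ∫ z in (-1 : ℝ)..1, g z = 0) (z₀ : ℝ) :
    |g z₀| ^ 2 / (2 * L) ≤ ⨆ z, g z := by
  have hcont := continuous_of_abs_sub_le_mul hLip
  have hS : ∀ z, g z ≤ ⨆ z, g z :=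
    le_ciSup (hcont.bddAbove_range_of_hasCompactSupport (.intro isCompact_Icc hsupp))
  have hS₀ : 0 ≤ ⨆ z, g z := hsupp 2 (by norm_num) ▸ hS 2
  rcases eq_or_ne (g z₀) 0 with hzero | h₀
  · simpa [hzero] using hS₀
  set r := |g z₀| / L with hr
  have hsub := Icc_subset_of_abs_sub_le_mul hL hLip isClosed_Icc hsupp h₀
  have hr₀ : 0 ≤ r := by positivity
  have hleft : -1 ≤ z₀ - r := (hsub (left_mem_Icc.2 (by linarith))).1
  have hright : z₀ + r ≤ 1 := (hsub (right_mem_Icc.2 (by linarith))).2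
  have hrL : L * r = |g z₀| := by rw [hr]; field_simp
  rw [← hrL, show (L * r) ^ 2 / (2 * L) = L * r ^ 2 / 2 by field_simp]
  rcases h₀.lt_or_gt with hneg | hpos
  · have hmin : g z₀ = -(L * r) := by rw [hrL, abs_of_neg hneg, neg_neg]
    have hmean := intervalIntegral.integral_le_mul_add_integral_of_le
      hcont.intervalIntegrable hleft (by linarith) hright fun z _ => hS z
    have htent := integral_le_of_abs_sub_le_mul hLip z₀ hr₀
    -- `0 = ∫ g ≤ (sup g) (2 - 2r) - L r²`
    nlinarith
  · have hmax : g z₀ = L * r := by rw [hrL, abs_of_pos hpos]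
    have hr₁ : r ≤ 1 := by linarith
    nlinarith [hS z₀]

end Lipschitz

/-- Lower bound on the positive part of a Lipschitz function with zero mean
that is supported in `[-1,1]` (equations (3.28)–(3.32) of the paper):
`M⁺ ≥ M²/(2L)`, where `M = sup |g|` and `M⁺ = sup g`. -/
theorem sup_pos_part_lower_bound
    (L : ℝ) (hL : 0 < L) (g : ℝ → ℝ)
    (hLip : ∀ x y : ℝ, |g x - g y| ≤ L * |x - y|)
    (hsupp : ∀ z : ℝ, z ∉ Set.Icc (-1:ℝ) 1 → g z = 0)
    (hint : (∫ z in (-1:ℝ)..1, g z) = 0) :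
    (⨆ z : ℝ, |g z|) ^ 2 / (2 * L) ≤ (⨆ z : ℝ, g z) ∧
      (g ≠ 0 → 0 < ⨆ z : ℝ, g z) := by
  have hbound := sq_abs_div_le_iSup hL hLip hsupp hint
  refine ⟨?_, fun hne => ?_⟩
  · obtain ⟨z₀, hmax⟩ :=
      (continuous_of_abs_sub_le_mul hLip).abs.exists_forall_ge_of_hasCompactSupport
        (HasCompactSupport.intro isCompact_Icc hsupp).abs
    have hsup : ⨆ z, |g z| = |g z₀| :=
      le_antisymm (ciSup_le hmax) (le_ciSup ⟨_, forall_mem_range.2 hmax⟩ z₀)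
    rw [hsup]
    exact hbound z₀
  · obtain ⟨z, hz⟩ := Function.ne_iff.1 hne
    exact (div_pos (pow_pos (abs_pos.2 hz) 2) (by positivity)).trans_le (hbound z)
end

section
/- Let d₁, d₂, c, λ ∈ ℝ, and let a be the 4×4 real matrix with rows (0,0,0,1), (0,0,−1,0), (−c,−d₂,0,0), (d₁,c,0,0). Set m = (d₁+d₂)/2, r = (d₁−d₂)/2, and R = √(r²+c²). Then det(λ·I − a) = (λ² − (m+R))·(λ² − (m−R)). -/
/-!
Writing `λI − a` in 2×2 blocks, `[[λI, −J], [−B, λI]]` with `J = [[0, 1], [−1, 0]]`, its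
determinant is `det(λ²I − JB)`, and `JB = [[d₁, c], [c, d₂]]` is symmetric. So the eigenvalues of
`a` are the square roots of those of `JB`, namely `m ± R`.
-/

open Matrix

theorem det_smul_one_sub_planewave {R : Type*} [CommRing R] (d₁ d₂ c x : R) :
    (x • (1 : Matrix (Fin 4) (Fin 4) R) -
        !![0, 0, 0, 1; 0, 0, -1, 0; -c, -d₂, 0, 0; d₁, c, 0, 0]).det =
      ((x ^ 2) • (1 : Matrix (Fin 2) (Fin 2) R) - !![d₁, c; c, d₂]).det := by
  simp only [det_succ_row_zero, Nat.succ_eq_add_one, Nat.reduceAdd, Fin.isValue, Matrix.sub_apply,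
    Matrix.smul_apply, one_apply, smul_eq_mul, mul_ite, mul_one, mul_zero, of_apply, cons_val',
    cons_val_fin_one, cons_val_zero, submatrix_apply, Fin.succ_zero_eq_one, Fin.succAbove,
    cons_val_one, submatrix_submatrix, Function.comp_apply, Fin.succ_one_eq_two, cons_val,
    det_unique, Fin.default_eq_zero, Fin.reduceSucc, Fin.castSucc_zero, Fin.sum_univ_succ,
    Fin.coe_ofNat_eq_mod, Nat.zero_mod, pow_zero, one_mul, lt_self_iff_false, ↓reduceIte,
    Fin.castSucc_one, Finset.univ_unique, Fin.val_succ, Fin.val_eq_zero, zero_add, pow_one,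
    Fin.castSucc_succ, neg_mul, neg_sub, Fin.succ_pos, Finset.sum_singleton, right_eq_ite_iff,
    one_ne_zero, imp_false, not_lt, nonpos_iff_eq_zero, Fin.reduceEq, not_lt_zero,
    Fin.reduceCastSucc, left_eq_ite_iff, not_le, even_two, Even.neg_pow, one_pow, Fin.reduceLT,
    sub_zero, zero_le, sub_self, add_zero, sub_neg_eq_add, zero_sub, mul_neg, zero_mul, neg_zero,
    neg_neg, cons_val_succ, Fin.succ_ne_zero, zero_ne_one, Fin.reduceLE, Fin.lt_one_iff,
    Std.le_refl, Finset.sum_neg_distrib]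
  ring

theorem det_smul_one_sub_symm_fin_two (p q s x : ℝ) :
    (x • (1 : Matrix (Fin 2) (Fin 2) ℝ) - !![p, s; s, q]).det =
      (x - ((p + q) / 2 + √(((p - q) / 2) ^ 2 + s ^ 2))) *
        (x - ((p + q) / 2 - √(((p - q) / 2) ^ 2 + s ^ 2))) := by
  have hR : √(((p - q) / 2) ^ 2 + s ^ 2) ^ 2 = ((p - q) / 2) ^ 2 + s ^ 2 :=
    Real.sq_sqrt (by positivity)
  simp only [det_fin_two, Matrix.sub_apply, Matrix.smul_apply, one_apply_eq, one_apply_ne,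
    smul_eq_mul, of_apply, cons_val', cons_val_zero, cons_val_one, cons_val_fin_one, ne_eq,
    zero_ne_one, one_ne_zero, not_false_eq_true, mul_one, mul_zero, zero_sub]
  linear_combination hR

/-- Characteristic polynomial computation (equation (4.14)) for the matrix of
the plane-wave crystal system:
`det(λI − a) = (λ² − (m+R))(λ² − (m−R))` with `m = (d₁+d₂)/2`, `r = (d₁−d₂)/2`,
`R = √(r²+c²)`. -/
theorem charpoly_planewave
    (d₁ d₂ c lam : ℝ) :
    Matrix.det
        (lam • (1 : Matrix (Fin 4) (Fin 4) ℝ) -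
          !![0, 0, 0, 1;
             0, 0, -1, 0;
             -c, -d₂, 0, 0;
             d₁, c, 0, 0])
      = (lam ^ 2 - ((d₁ + d₂) / 2 + Real.sqrt (((d₁ - d₂) / 2) ^ 2 + c ^ 2))) *
        (lam ^ 2 - ((d₁ + d₂) / 2 - Real.sqrt (((d₁ - d₂) / 2) ^ 2 + c ^ 2))) := by
  rw [det_smul_one_sub_planewave, det_smul_one_sub_symm_fin_two]
end

section
/- Let d₁, d₂, c ∈ ℝ with c ≠ 0, let a be the 4×4 real matrix with rows (0,0,0,1), (0,0,−1,0), (−c,−d₂,0,0), (d₁,c,0,0), and set m = (d₁+d₂)/2, r = (d₁−d₂)/2, R = √(r²+c²). Let λ ∈ ℝ satisfy (λ² − (m+R))·(λ² − (m−R)) = 0, and set μ = (λ² − d₂)/c. Then the vector v = (μ, 1, −λ, λμ) satisfies a·v = λ·v. -/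
open Matrix

/-- Explicit eigenvectors (equation (4.20)) of the matrix of the plane-wave
crystal system in the coupled case `c ≠ 0`: if `λ` is a root of the
characteristic polynomial and `μ = (λ² − d₂)/c`, then `(μ, 1, −λ, λμ)` is an
eigenvector of `a` with eigenvalue `λ`. -/
theorem eigenvector_planewave
    (d₁ d₂ c lam : ℝ) (hc : c ≠ 0)
    (hlam : (lam ^ 2 - ((d₁ + d₂) / 2 + Real.sqrt (((d₁ - d₂) / 2) ^ 2 + c ^ 2))) *
        (lam ^ 2 - ((d₁ + d₂) / 2 - Real.sqrt (((d₁ - d₂) / 2) ^ 2 + c ^ 2))) = 0) :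
    (!![0, 0, 0, 1;
        0, 0, -1, 0;
        -c, -d₂, 0, 0;
        d₁, c, 0, 0] : Matrix (Fin 4) (Fin 4) ℝ).mulVec
        ![(lam ^ 2 - d₂) / c, 1, -lam, lam * ((lam ^ 2 - d₂) / c)]
      = lam • ![(lam ^ 2 - d₂) / c, 1, -lam, lam * ((lam ^ 2 - d₂) / c)] := by
  have hR : Real.sqrt (((d₁ - d₂) / 2) ^ 2 + c ^ 2) ^ 2 = ((d₁ - d₂) / 2) ^ 2 + c ^ 2 :=
    Real.sq_sqrt (by positivity)
  have key : (lam ^ 2 - d₁) * (lam ^ 2 - d₂) = c ^ 2 := by nlinarith [hlam, hR]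
  funext i
  fin_cases i <;>
    simp [Matrix.mulVec, dotProduct, Fin.sum_univ_succ] <;>
    field_simp <;> ring_nf <;> nlinarith [key]
end

section
/- Let r > 0 and c ∈ ℝ with c ≠ 0, and set μ₊ = (r + √(r²+c²))/c and μ₋ = (r − √(r²+c²))/c. Then μ₊·μ₋ = −1 and μ₊ + μ₋ = 2r/c. Moreover, if |c| ≤ r, then |μ₊ − 2r/c| ≤ |c|/(2r) and |μ₋ + c/(2r)| ≤ |c|³/(8r³). -/
/-!
With `s = √(r² + c²)` we have `(r + s)(r - s) = -c²`, which gives the product identity, and the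
sum identity is linear. The expansions both come from the gap `s - r = c² / (s + r) ≤ c² / (2r)`:
`μ₊ - 2r/c = (s - r)/c`, and `μ₋ + c/(2r) = (s - r)² / (2rc)` after completing the square.
-/

noncomputable section

def muPlus (r c : ℝ) : ℝ := (r + √(r ^ 2 + c ^ 2)) / c

def muMinus (r c : ℝ) : ℝ := (r - √(r ^ 2 + c ^ 2)) / c

section

variable {r c : ℝ}

lemma le_sqrt_sq_add_sq (hr : 0 ≤ r) (c : ℝ) : r ≤ √(r ^ 2 + c ^ 2) :=
  (Real.le_sqrt hr (by positivity)).2 (by nlinarith)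

lemma sqrt_sq_add_sq_sub_le (hr : 0 < r) (c : ℝ) : √(r ^ 2 + c ^ 2) - r ≤ c ^ 2 / (2 * r) := by
  have hs : √(r ^ 2 + c ^ 2) ^ 2 = r ^ 2 + c ^ 2 := Real.sq_sqrt (by positivity)
  have hrs := le_sqrt_sq_add_sq hr.le c
  rw [le_div_iff₀ (by positivity)]
  nlinarith

lemma muPlus_mul_muMinus (r : ℝ) (hc : c ≠ 0) : muPlus r c * muMinus r c = -1 := by
  have hs : √(r ^ 2 + c ^ 2) ^ 2 = r ^ 2 + c ^ 2 := Real.sq_sqrt (by positivity)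
  unfold muPlus muMinus
  field_simp
  linear_combination -hs

lemma muPlus_add_muMinus (r c : ℝ) : muPlus r c + muMinus r c = 2 * r / c := by
  unfold muPlus muMinus
  ring

lemma abs_muPlus_sub_le (hr : 0 < r) (c : ℝ) : |muPlus r c - 2 * r / c| ≤ |c| / (2 * r) := by
  rcases eq_or_ne c 0 with rfl | hc
  · simp [muPlus]
  have hgap : 0 ≤ √(r ^ 2 + c ^ 2) - r := sub_nonneg.2 (le_sqrt_sq_add_sq hr.le c)
  calc |muPlus r c - 2 * r / c|
      = (√(r ^ 2 + c ^ 2) - r) / |c| := by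
        rw [muPlus, ← sub_div, show r + √(r ^ 2 + c ^ 2) - 2 * r = √(r ^ 2 + c ^ 2) - r by ring,
          abs_div, abs_of_nonneg hgap]
    _ ≤ c ^ 2 / (2 * r) / |c| :=
        div_le_div_of_nonneg_right (sqrt_sq_add_sq_sub_le hr c) (abs_nonneg c)
    _ = |c| / (2 * r) := by
        rw [← sq_abs c]
        field_simp

lemma muMinus_add_eq (hr : r ≠ 0) (hc : c ≠ 0) :
    muMinus r c + c / (2 * r) = (√(r ^ 2 + c ^ 2) - r) ^ 2 / (2 * r * c) := by
  have hs : √(r ^ 2 + c ^ 2) ^ 2 = r ^ 2 + c ^ 2 := Real.sq_sqrt (by positivity)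
  unfold muMinus
  field_simp
  linear_combination -hs

lemma abs_muMinus_add_le (hr : 0 < r) (c : ℝ) :
    |muMinus r c + c / (2 * r)| ≤ |c| ^ 3 / (8 * r ^ 3) := by
  rcases eq_or_ne c 0 with rfl | hc
  · simp [muMinus]
  have hgap : 0 ≤ √(r ^ 2 + c ^ 2) - r := sub_nonneg.2 (le_sqrt_sq_add_sq hr.le c)
  calc |muMinus r c + c / (2 * r)|
      = (√(r ^ 2 + c ^ 2) - r) ^ 2 / (2 * r * |c|) := by
        rw [muMinus_add_eq hr.ne' hc, abs_div, abs_of_nonneg (sq_nonneg _), abs_mul,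
          abs_of_pos (by positivity : (0 : ℝ) < 2 * r)]
    _ ≤ (c ^ 2 / (2 * r)) ^ 2 / (2 * r * |c|) := by
        gcongr
        exact sqrt_sq_add_sq_sub_le hr c
    _ = |c| ^ 3 / (8 * r ^ 3) := by
        rw [← sq_abs c]
        field_simp
        ring

end

end

theorem mu_identities_and_expansions_general
    (r c : ℝ) (hc : c ≠ 0) :
    ((r + Real.sqrt (r ^ 2 + c ^ 2)) / c) * ((r - Real.sqrt (r ^ 2 + c ^ 2)) / c) = -1 ∧
    (r + Real.sqrt (r ^ 2 + c ^ 2)) / c + (r - Real.sqrt (r ^ 2 + c ^ 2)) / c = 2 * r / c ∧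
    (|c| ≤ r →
      |(r + Real.sqrt (r ^ 2 + c ^ 2)) / c - 2 * r / c| ≤ |c| / (2 * r) ∧
      |(r - Real.sqrt (r ^ 2 + c ^ 2)) / c + c / (2 * r)| ≤ |c| ^ 3 / (8 * r ^ 3)) := by
  refine ⟨muPlus_mul_muMinus r hc, muPlus_add_muMinus r c, fun hcr => ?_⟩
  have hr : 0 < r := (abs_pos.2 hc).trans_le hcr
  exact ⟨abs_muPlus_sub_le hr c, abs_muMinus_add_le hr c⟩

/-- Algebraic identities (4.23) and asymptotic expansions (4.34) for the
slopes `μ₊, μ₋` of the eigenvectors of the plane-wave crystal system. -/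
theorem mu_identities_and_expansions
    (r c : ℝ) (hr : 0 < r) (hc : c ≠ 0) :
    ((r + Real.sqrt (r ^ 2 + c ^ 2)) / c) * ((r - Real.sqrt (r ^ 2 + c ^ 2)) / c) = -1 ∧
    (r + Real.sqrt (r ^ 2 + c ^ 2)) / c + (r - Real.sqrt (r ^ 2 + c ^ 2)) / c = 2 * r / c ∧
    (|c| ≤ r →
      |(r + Real.sqrt (r ^ 2 + c ^ 2)) / c - 2 * r / c| ≤ |c| / (2 * r) ∧
      |(r - Real.sqrt (r ^ 2 + c ^ 2)) / c + c / (2 * r)| ≤ |c| ^ 3 / (8 * r ^ 3)) :=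
  mu_identities_and_expansions_general r c hc
end

section
/- Let K₁, K₂ ∈ ℝ with 0 < K₂ < K₁ < 1, set m₀ = (K₁+K₂)/2 and r₀ = (K₁−K₂)/2, and let h ∈ ℝ with 0 < h < min{ r₀, K₂, 1−K₁ } / (2m₀). Let d₁, d₂, c ∈ ℝ satisfy |K₁ − d₁| < h·K₁, |K₂ − d₂| < h·K₂, and c² < min{ K₁·(K₂ − h(K₁+K₂)) , (1−K₂)·(1−K₁ − h(K₁+K₂)) }. Set m = (d₁+d₂)/2, r = (d₁−d₂)/2 and R = √(r²+c²). Then 0 < m − R < m₀ < m + R < 1. -/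
set_option maxHeartbeats 1000000


/-- The key quantitative estimate (equation (4.13)) in the proof of Lemma 4.1:
under small perturbations of the coefficients the squares of the
characteristic speeds stay in (0,1) and remain separated by `m₀ = (K₁+K₂)/2`. -/
theorem speeds_squared_estimate
    (K₁ K₂ h d₁ d₂ c : ℝ) (hK₂ : 0 < K₂) (hK : K₂ < K₁) (hK₁ : K₁ < 1)
    (hh0 : 0 < h)
    (hh : h < min (min ((K₁ - K₂) / 2) K₂) (1 - K₁) / (2 * ((K₁ + K₂) / 2)))
    (hd₁ : |K₁ - d₁| < h * K₁) (hd₂ : |K₂ - d₂| < h * K₂)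
    (hc : c ^ 2 < min (K₁ * (K₂ - h * (K₁ + K₂)))
      ((1 - K₂) * (1 - K₁ - h * (K₁ + K₂)))) :
    0 < (d₁ + d₂) / 2 - Real.sqrt (((d₁ - d₂) / 2) ^ 2 + c ^ 2) ∧
    (d₁ + d₂) / 2 - Real.sqrt (((d₁ - d₂) / 2) ^ 2 + c ^ 2) < (K₁ + K₂) / 2 ∧
    (K₁ + K₂) / 2 < (d₁ + d₂) / 2 + Real.sqrt (((d₁ - d₂) / 2) ^ 2 + c ^ 2) ∧
    (d₁ + d₂) / 2 + Real.sqrt (((d₁ - d₂) / 2) ^ 2 + c ^ 2) < 1 := by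
  set R := Real.sqrt (((d₁ - d₂) / 2) ^ 2 + c ^ 2) with hRdef
  have hR0 : 0 ≤ R := Real.sqrt_nonneg _
  have hRsq : R ^ 2 = ((d₁ - d₂) / 2) ^ 2 + c ^ 2 :=
    Real.sq_sqrt (by positivity)
  obtain ⟨hd₁l, hd₁r⟩ := abs_lt.mp hd₁
  obtain ⟨hd₂l, hd₂r⟩ := abs_lt.mp hd₂
  have hK₁0 : 0 < K₁ := hK₂.trans hK
  have hsum : (0:ℝ) < 2 * ((K₁ + K₂) / 2) := by linarith
  have h1 : h * (2 * ((K₁ + K₂) / 2)) <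
      min (min ((K₁ - K₂) / 2) K₂) (1 - K₁) := (lt_div_iff₀ hsum).mp hh
  rw [show 2 * ((K₁ + K₂) / 2) = K₁ + K₂ by ring] at h1
  have hA : h * (K₁ + K₂) < (K₁ - K₂) / 2 :=
    h1.trans_le ((min_le_left _ _).trans (min_le_left _ _))
  have hB : h * (K₁ + K₂) < K₂ :=
    h1.trans_le ((min_le_left _ _).trans (min_le_right _ _))
  have hC : h * (K₁ + K₂) < 1 - K₁ := h1.trans_le (min_le_right _ _)
  have hc1 : c ^ 2 < K₁ * (K₂ - h * (K₁ + K₂)) := lt_of_lt_of_le hc (min_le_left _ _)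
  have hc2 : c ^ 2 < (1 - K₂) * (1 - K₁ - h * (K₁ + K₂)) :=
    lt_of_lt_of_le hc (min_le_right _ _)
  have hhalf : h < 1 / 2 := by nlinarith
  have hd₁pos : K₁ * (1 - h) < d₁ := by nlinarith
  have hd₂pos : K₂ * (1 - h) < d₂ := by nlinarith
  have hp1 : 0 < K₁ * (1 - h) := mul_pos hK₁0 (by linarith)
  have hp2 : 0 < K₂ * (1 - h) := mul_pos hK₂ (by linarith)
  have hd12 : K₁ * (1 - h) * (K₂ * (1 - h)) < d₁ * d₂ :=
    mul_lt_mul' hd₁pos.le hd₂pos hp2.le (hp1.trans hd₁pos)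
  have mid1 : K₁ * (K₂ - h * (K₁ + K₂)) ≤ K₁ * (1 - h) * (K₂ * (1 - h)) := by
    nlinarith [mul_pos (mul_pos hh0 hK₁0) (sub_pos.mpr hK),
      mul_pos (mul_pos (mul_pos hh0 hh0) hK₁0) hK₂]
  have key1 : c ^ 2 < d₁ * d₂ := by linarith
  -- upper bounds for the perturbed coefficients
  have hd₁up : d₁ < K₁ * (1 + h) := by nlinarith
  have hd₂up : d₂ < K₂ * (1 + h) := by nlinarith
  have hq1 : 0 < 1 - K₁ * (1 + h) := by nlinarith
  have hq2 : 0 < 1 - K₂ * (1 + h) := by nlinarith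
  have hd12' : (1 - K₁ * (1 + h)) * (1 - K₂ * (1 + h)) < (1 - d₁) * (1 - d₂) :=
    mul_lt_mul' (by linarith) (by linarith) (by linarith) (by linarith)
  have mid2 : (1 - K₂) * (1 - K₁ - h * (K₁ + K₂)) ≤
      (1 - K₁ * (1 + h)) * (1 - K₂ * (1 + h)) := by
    nlinarith [mul_pos (mul_pos hh0 hK₂) (sub_pos.mpr hK),
      mul_pos (mul_pos (mul_pos hh0 hh0) hK₁0) hK₂]
  have key2 : c ^ 2 < (1 - d₁) * (1 - d₂) := by linarith
  have hsplit : h * (K₁ + K₂) = h * K₁ + h * K₂ := by ring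
  have hmpos : 0 < (d₁ + d₂) / 2 := by linarith
  have hid1 : ((d₁ + d₂) / 2) ^ 2 - ((d₁ - d₂) / 2) ^ 2 = d₁ * d₂ := by ring
  have hRlt : R ^ 2 < ((d₁ + d₂) / 2) ^ 2 := by rw [hRsq]; linarith
  have hr : h * (K₁ + K₂) / 2 < (d₁ - d₂) / 2 := by linarith
  have hposKK : 0 < h * (K₁ + K₂) := mul_pos hh0 (by linarith)
  have hrpos : 0 < (d₁ - d₂) / 2 := by linarith
  have hrR : (d₁ - d₂) / 2 ≤ R := by
    rw [hRdef]
    calc (d₁ - d₂) / 2 = Real.sqrt (((d₁ - d₂) / 2) ^ 2) :=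
          (Real.sqrt_sq hrpos.le).symm
      _ ≤ _ := Real.sqrt_le_sqrt (by nlinarith [sq_nonneg c])
  have h1m : 0 < 1 - (d₁ + d₂) / 2 := by linarith
  have hid2 : (1 - (d₁ + d₂) / 2) ^ 2 - ((d₁ - d₂) / 2) ^ 2 = (1 - d₁) * (1 - d₂) := by
    ring
  have hRlt2 : R ^ 2 < (1 - (d₁ + d₂) / 2) ^ 2 := by rw [hRsq]; linarith
  have e1 : R < (d₁ + d₂) / 2 := lt_of_pow_lt_pow_left₀ 2 hmpos.le hRlt
  have e2 : R < 1 - (d₁ + d₂) / 2 := lt_of_pow_lt_pow_left₀ 2 h1m.le hRlt2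
  exact ⟨by linarith, by linarith, by linarith, by linarith⟩
end

section
/- Let K₁, K₂, C₁₁₁, C₁₁₂, C₁₂₂, C₂₂₂ ∈ ℝ with 0 < K₂ < K₁ < 1. For u ∈ ℝ⁴ define d₁(u) = K₁ + 6C₁₁₁·u¹ + 2C₁₁₂·u², d₂(u) = K₂ + 2C₁₂₂·u¹ + 6C₂₂₂·u², c(u) = 2C₁₁₂·u¹ + 2C₁₂₂·u², let a(u) be the 4×4 matrix with rows (0,0,0,1), (0,0,−1,0), (−c(u),−d₂(u),0,0), (d₁(u),c(u),0,0), and set m(u) = (d₁(u)+d₂(u))/2, R(u) = √( ((d₁(u)−d₂(u))/2)² + c(u)² ). Then there exists δ > 0 such that for every u ∈ ℝ⁴ with |u| < 2δ: 0 < m(u) − R(u) < (K₁+K₂)/2 < m(u) + R(u) < 1, and the four numbers √(m(u)+R(u)), √(m(u)−R(u)), −√(m(u)−R(u)), −√(m(u)+R(u)) are pairwise distinct real eigenvalues of a(u), all lying in the open interval (−1,1). -/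
open Matrix Filter Topology

/-!
At the trivial state the coefficients `d₁, d₂, c` of `a(u)` are `K₁, K₂, 0`, and they depend
continuously on `u`; on a small ball they stay within `ε` of these values. The characteristic
polynomial of `a(u)` is `λ⁴ - (d₁ + d₂) λ² + (d₁ d₂ - c²)`, a quadratic in `λ²` whose roots `m ± R`
are the eigenvalues of the symmetric matrix `[[d₁, c], [c, d₂]]`. The estimates
`(d₁ - d₂)/2 ≤ R ≤ (d₁ - d₂)/2 + |c|` place `m + R` in `[d₁, d₁ + |c|]` and `m - R` in
`[d₂ - |c|, d₂]`, which for small `ε` separates them from each other, from `0` and from `1`.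
-/

theorem eventually_abs_linear_lt {ι : Type*} (i j : ι) (a b : ℝ) {ε : ℝ}
    (hε : 0 < ε) : ∀ᶠ u in 𝓝 (0 : EuclideanSpace ℝ ι), |a * u i + b * u j| < ε :=
  ((by fun_prop : Continuous fun u : EuclideanSpace ℝ ι => |a * u i + b * u j|).tendsto' 0 0
    (by simp)).eventually_lt_const hε

theorem Real.sqrt_sq_add_sq_le (a b : ℝ) : √(a ^ 2 + b ^ 2) ≤ |a| + |b| :=
  (Real.sqrt_le_left (by positivity)).2 <| by
    nlinarith [sq_abs a, sq_abs b, abs_nonneg a, abs_nonneg b]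

theorem exists_planeWave_speed_bounds {K₁ K₂ : ℝ} (hK₂ : 0 < K₂) (hK : K₂ < K₁) (hK₁ : K₁ < 1) :
    ∃ ε > 0, ∀ d₁ d₂ c : ℝ, |d₁ - K₁| < ε → |d₂ - K₂| < ε → |c| < ε →
      let m := (d₁ + d₂) / 2
      let R := √(((d₁ - d₂) / 2) ^ 2 + c ^ 2)
      0 < m - R ∧ m - R < (K₁ + K₂) / 2 ∧ (K₁ + K₂) / 2 < m + R ∧ m + R < 1 := by
  obtain ⟨ε, hε, hgap, hsub, hpos⟩ :
      ∃ ε > 0, 2 * ε ≤ K₁ - K₂ ∧ 2 * ε ≤ 1 - K₁ ∧ 2 * ε ≤ K₂ := by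
    refine ⟨min (K₁ - K₂) (min (1 - K₁) K₂) / 2, by simp [hK, hK₁, hK₂], ?_, ?_, ?_⟩ <;>
      linarith [min_le_left (K₁ - K₂) (min (1 - K₁) K₂), min_le_left (1 - K₁) K₂,
        min_le_right (K₁ - K₂) (min (1 - K₁) K₂), min_le_right (1 - K₁) K₂]
  refine ⟨ε, hε, fun d₁ d₂ c hd₁ hd₂ hc => ?_⟩
  intro m R
  have hm : m = (d₁ + d₂) / 2 := rfl
  rw [abs_lt] at hd₁ hd₂
  have hR_ge : (d₁ - d₂) / 2 ≤ R :=
    (le_abs_self _).trans (Real.abs_le_sqrt (le_add_of_nonneg_right (sq_nonneg c)))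
  have hR_le : R ≤ (d₁ - d₂) / 2 + |c| := by
    have h := Real.sqrt_sq_add_sq_le ((d₁ - d₂) / 2) c
    rwa [abs_of_nonneg (by linarith : 0 ≤ (d₁ - d₂) / 2)] at h
  refine ⟨?_, ?_, ?_, ?_⟩ <;> linarith

def planeWaveMatrix {R : Type*} [Ring R] (d₁ d₂ c : R) : Matrix (Fin 4) (Fin 4) R :=
  !![0, 0, 0, 1; 0, 0, -1, 0; -c, -d₂, 0, 0; d₁, c, 0, 0]

theorem det_smul_one_sub_planeWaveMatrix {R : Type*} [CommRing R] (d₁ d₂ c lam : R) :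
    det (lam • (1 : Matrix (Fin 4) (Fin 4) R) - planeWaveMatrix d₁ d₂ c) =
      lam ^ 4 - (d₁ + d₂) * lam ^ 2 + (d₁ * d₂ - c ^ 2) := by
  simp [planeWaveMatrix, det_succ_row_zero, Fin.sum_univ_succ, one_apply, Fin.succAbove]
  ring

theorem det_smul_one_sub_planeWaveMatrix_eq_zero {K : Type*} [Field K] [CharZero K]
    {d₁ d₂ c r lam : K}
    (hr : r ^ 2 = ((d₁ - d₂) / 2) ^ 2 + c ^ 2) (hlam : lam ^ 2 = (d₁ + d₂) / 2 + r) :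
    det (lam • (1 : Matrix (Fin 4) (Fin 4) K) - planeWaveMatrix d₁ d₂ c) = 0 := by
  rw [det_smul_one_sub_planeWaveMatrix]
  linear_combination (lam ^ 2 - (d₁ + d₂) / 2 + r) * hlam + hr

theorem List.pairwise_ne_pm_of_pos_of_lt {a b : ℝ} (ha : 0 < a) (hab : a < b) :
    [b, a, -a, -b].Pairwise (· ≠ ·) := by
  simp only [List.pairwise_cons, List.mem_cons, List.not_mem_nil, or_false, forall_eq_or_imp,
    forall_eq, List.Pairwise.nil, IsEmpty.forall_iff, implies_true, and_true]
  refine ⟨⟨?_, ?_, ?_⟩, ⟨?_, ?_⟩, ?_⟩ <;> intro h <;> linarith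

theorem planeWave_eigenvalues {d₁ d₂ c : ℝ} :
    let m := (d₁ + d₂) / 2
    let R := √(((d₁ - d₂) / 2) ^ 2 + c ^ 2)
    0 < m - R → m + R < 1 →
      ∀ lam ∈ [√(m + R), √(m - R), -√(m - R), -√(m + R)],
        det (lam • (1 : Matrix (Fin 4) (Fin 4) ℝ) - planeWaveMatrix d₁ d₂ c) = 0 ∧
          lam ∈ Set.Ioo (-1 : ℝ) 1 := by
  intro m R hmR hpR lam hlam
  have hR_nonneg : 0 ≤ R := Real.sqrt_nonneg _
  have hR : R ^ 2 = ((d₁ - d₂) / 2) ^ 2 + c ^ 2 := Real.sq_sqrt (by positivity)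
  have hsq : lam ^ 2 = m + R ∨ lam ^ 2 = m + -R := by
    simp only [List.mem_cons, List.not_mem_nil, or_false] at hlam
    rcases hlam with rfl | rfl | rfl | rfl <;>
      simp [Real.sq_sqrt, hmR.le, ← sub_eq_add_neg, (by linarith : 0 ≤ m + R)]
  have hIoo (hlt : lam ^ 2 < 1) : lam ∈ Set.Ioo (-1 : ℝ) 1 :=
    abs_lt.1 ((sq_lt_one_iff_abs_lt_one lam).1 hlt)
  rcases hsq with h | h
  · exact ⟨det_smul_one_sub_planeWaveMatrix_eq_zero hR h, hIoo (by linarith)⟩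
  · exact ⟨det_smul_one_sub_planeWaveMatrix_eq_zero (by rwa [neg_sq]) h, hIoo (by linarith)⟩

/-- Uniform strict hyperbolicity of the plane-wave crystal system (Lemma 4.1):
for a birefringent crystal (0 < K₂ < K₁ < 1), on a small ball around the
trivial state the matrix `a(u)` has four pairwise distinct real eigenvalues
`±√(m(u)±R(u))`, all in (−1,1). -/
theorem uniform_strict_hyperbolicity
    (K₁ K₂ C111 C112 C122 C222 : ℝ)
    (hK₂ : 0 < K₂) (hK : K₂ < K₁) (hK₁ : K₁ < 1) :
    ∃ δ > (0:ℝ), ∀ u : EuclideanSpace ℝ (Fin 4), ‖u‖ < 2 * δ →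
      let d₁ := K₁ + 6 * C111 * u 0 + 2 * C112 * u 1
      let d₂ := K₂ + 2 * C122 * u 0 + 6 * C222 * u 1
      let c := 2 * C112 * u 0 + 2 * C122 * u 1
      let m := (d₁ + d₂) / 2
      let R := Real.sqrt (((d₁ - d₂) / 2) ^ 2 + c ^ 2)
      let A : Matrix (Fin 4) (Fin 4) ℝ :=
        !![0, 0, 0, 1; 0, 0, -1, 0; -c, -d₂, 0, 0; d₁, c, 0, 0]
      (0 < m - R ∧ m - R < (K₁ + K₂) / 2 ∧
        (K₁ + K₂) / 2 < m + R ∧ m + R < 1) ∧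
      List.Pairwise (· ≠ ·)
        [Real.sqrt (m + R), Real.sqrt (m - R), -Real.sqrt (m - R), -Real.sqrt (m + R)] ∧
      ∀ lam ∈ [Real.sqrt (m + R), Real.sqrt (m - R),
          -Real.sqrt (m - R), -Real.sqrt (m + R)],
        Matrix.det (lam • (1 : Matrix (Fin 4) (Fin 4) ℝ) - A) = 0 ∧
        lam ∈ Set.Ioo (-1:ℝ) 1 := by
  obtain ⟨ε, hε, hspeeds⟩ := exists_planeWave_speed_bounds hK₂ hK hK₁
  obtain ⟨r, hr, hball⟩ := Metric.eventually_nhds_iff_ball.mp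
    ((eventually_abs_linear_lt (0 : Fin 4) 1 (6 * C111) (2 * C112) hε).and
      ((eventually_abs_linear_lt (0 : Fin 4) 1 (2 * C122) (6 * C222) hε).and
        (eventually_abs_linear_lt (0 : Fin 4) 1 (2 * C112) (2 * C122) hε)))
  refine ⟨r / 2, half_pos hr, fun u hu => ?_⟩
  obtain ⟨h₁, h₂, hc⟩ := hball u (mem_ball_zero_iff.2 (by linarith))
  intro d₁ d₂ c m R A
  have hbounds : 0 < m - R ∧ m - R < (K₁ + K₂) / 2 ∧ (K₁ + K₂) / 2 < m + R ∧ m + R < 1 :=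
    hspeeds d₁ d₂ c (by simpa [d₁, add_assoc] using h₁) (by simpa [d₂, add_assoc] using h₂) hc
  exact ⟨hbounds, List.pairwise_ne_pm_of_pos_of_lt (Real.sqrt_pos.2 hbounds.1)
    (Real.sqrt_lt_sqrt hbounds.1.le (by linarith)), planeWave_eigenvalues hbounds.1 hbounds.2.2.2⟩
end

section
/- Let K₁ > 0 and C₁₁₁ ≠ 0 be real constants. Let u¹, u⁴ : ℝ×ℝ → ℝ be differentiable functions satisfying ∂_t u¹ + ∂_x u⁴ = 0 and ∂_t u⁴ + (K₁ + 6C₁₁₁·u¹)·∂_x u¹ = 0 at every point, and suppose K₁ + 6C₁₁₁·u¹(x,t) > 0 for all (x,t). Define m¹ = u⁴ + ( (K₁+6C₁₁₁·u¹)^{3/2} − K₁^{3/2} )/(9C₁₁₁) and m⁴ = u⁴ − ( (K₁+6C₁₁₁·u¹)^{3/2} − K₁^{3/2} )/(9C₁₁₁). Then at every point: ∂_t m¹ + √(K₁+6C₁₁₁·u¹)·∂_x m¹ = 0 and ∂_t m⁴ − √(K₁+6C₁₁₁·u¹)·∂_x m⁴ = 0. -/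
/-!
For the `p`-system `pₜ + qₓ = 0`, `qₜ + c(p)² pₓ = 0`, any `Φ` with `Φ' = c` gives the Riemann
invariants `q ± Φ(p)`: by the chain rule `(q ± Φ(p))ₜ ± c (q ± Φ(p))ₓ` equals
`(qₜ + c² pₓ) ± c (pₜ + qₓ)`, which vanishes. Here `c(v)² = K₁ + 6C₁₁₁v`, and
`Φ(v) = ((K₁ + 6C₁₁₁v)^{3/2} - K₁^{3/2}) / (9C₁₁₁)` is the antiderivative of `c` vanishing at `0`.
-/

open Real

theorem hasDerivAt_rpow_three_halves_sub_div {K C v : ℝ} (hC : C ≠ 0)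
    (hv : 0 < K + 6 * C * v) :
    HasDerivAt (fun w => ((K + 6 * C * w) ^ ((3:ℝ)/2) - K ^ ((3:ℝ)/2)) / (9 * C))
      (√(K + 6 * C * v)) v := by
  have hlin : HasDerivAt (fun w => K + 6 * C * w) (6 * C) v := by
    simpa using ((hasDerivAt_id v).const_mul (6 * C)).const_add K
  refine (((hlin.rpow_const (p := (3:ℝ)/2) (Or.inl hv.ne')).sub_const
    (K ^ ((3:ℝ)/2))).div_const (9 * C)).congr_deriv ?_
  rw [sqrt_eq_rpow]
  field_simp
  norm_num

theorem p_system_riemann_invariants_transport {Φ c : ℝ → ℝ} {p q : ℝ → ℝ → ℝ} {x t : ℝ}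
    (hΦ : HasDerivAt Φ (c (p x t)) (p x t))
    (hpt : DifferentiableAt ℝ (fun s => p x s) t)
    (hpx : DifferentiableAt ℝ (fun y => p y t) x)
    (hqt : DifferentiableAt ℝ (fun s => q x s) t)
    (hqx : DifferentiableAt ℝ (fun y => q y t) x)
    (hmass : deriv (fun s => p x s) t + deriv (fun y => q y t) x = 0)
    (hmomentum : deriv (fun s => q x s) t + c (p x t) ^ 2 * deriv (fun y => p y t) x = 0) :
    deriv (fun s => q x s + Φ (p x s)) t + c (p x t) * deriv (fun y => q y t + Φ (p y t)) x
        = 0 ∧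
      deriv (fun s => q x s - Φ (p x s)) t - c (p x t) * deriv (fun y => q y t - Φ (p y t)) x
        = 0 := by
  have hΦt : HasDerivAt (fun s => Φ (p x s)) _ t := hΦ.comp t hpt.hasDerivAt
  have hΦx : HasDerivAt (fun y => Φ (p y t)) _ x := hΦ.comp x hpx.hasDerivAt
  rw [(hqt.hasDerivAt.fun_add hΦt).deriv, (hqx.hasDerivAt.fun_add hΦx).deriv,
    (hqt.hasDerivAt.fun_sub hΦt).deriv, (hqx.hasDerivAt.fun_sub hΦx).deriv]
  constructor
  · linear_combination hmomentum + c (p x t) * hmass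
  · linear_combination hmomentum - c (p x t) * hmass

theorem riemann_invariant_transport_general
    (K₁ C111 : ℝ) (hC : C111 ≠ 0)
    (u1 u4 : ℝ → ℝ → ℝ)
    (hu1t : ∀ x t : ℝ, DifferentiableAt ℝ (fun s => u1 x s) t)
    (hu1x : ∀ x t : ℝ, DifferentiableAt ℝ (fun y => u1 y t) x)
    (hu4t : ∀ x t : ℝ, DifferentiableAt ℝ (fun s => u4 x s) t)
    (hu4x : ∀ x t : ℝ, DifferentiableAt ℝ (fun y => u4 y t) x)
    (hpos : ∀ x t : ℝ, 0 < K₁ + 6 * C111 * u1 x t)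
    (hpde1 : ∀ x t : ℝ, deriv (fun s => u1 x s) t + deriv (fun y => u4 y t) x = 0)
    (hpde2 : ∀ x t : ℝ, deriv (fun s => u4 x s) t +
      (K₁ + 6 * C111 * u1 x t) * deriv (fun y => u1 y t) x = 0) :
    ∀ x t : ℝ,
      (deriv (fun s => u4 x s +
          ((K₁ + 6 * C111 * u1 x s) ^ ((3:ℝ)/2) - K₁ ^ ((3:ℝ)/2)) / (9 * C111)) t +
        Real.sqrt (K₁ + 6 * C111 * u1 x t) *
          deriv (fun y => u4 y t +
            ((K₁ + 6 * C111 * u1 y t) ^ ((3:ℝ)/2) - K₁ ^ ((3:ℝ)/2)) / (9 * C111)) x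
        = 0) ∧
      (deriv (fun s => u4 x s -
          ((K₁ + 6 * C111 * u1 x s) ^ ((3:ℝ)/2) - K₁ ^ ((3:ℝ)/2)) / (9 * C111)) t -
        Real.sqrt (K₁ + 6 * C111 * u1 x t) *
          deriv (fun y => u4 y t -
            ((K₁ + 6 * C111 * u1 y t) ^ ((3:ℝ)/2) - K₁ ^ ((3:ℝ)/2)) / (9 * C111)) x
        = 0) := by
  intro x t
  refine p_system_riemann_invariants_transport (c := fun v => √(K₁ + 6 * C111 * v))
    (hasDerivAt_rpow_three_halves_sub_div hC (hpos x t))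
    (hu1t x t) (hu1x x t) (hu4t x t) (hu4x x t) (hpde1 x t) ?_
  rw [sq_sqrt (hpos x t).le]
  exact hpde2 x t

/-- Riemann invariant transport law (equation (4.44)) for one polarization of
the decoupled plane-wave crystal system: `m¹` and `m⁴` are constant along the
characteristics of speed `±√(K₁+6C₁₁₁u¹)`. -/
theorem riemann_invariant_transport
    (K₁ C111 : ℝ) (hK₁ : 0 < K₁) (hC : C111 ≠ 0)
    (u1 u4 : ℝ → ℝ → ℝ)
    (hu1t : ∀ x t : ℝ, DifferentiableAt ℝ (fun s => u1 x s) t)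
    (hu1x : ∀ x t : ℝ, DifferentiableAt ℝ (fun y => u1 y t) x)
    (hu4t : ∀ x t : ℝ, DifferentiableAt ℝ (fun s => u4 x s) t)
    (hu4x : ∀ x t : ℝ, DifferentiableAt ℝ (fun y => u4 y t) x)
    (hpos : ∀ x t : ℝ, 0 < K₁ + 6 * C111 * u1 x t)
    (hpde1 : ∀ x t : ℝ, deriv (fun s => u1 x s) t + deriv (fun y => u4 y t) x = 0)
    (hpde2 : ∀ x t : ℝ, deriv (fun s => u4 x s) t +
      (K₁ + 6 * C111 * u1 x t) * deriv (fun y => u1 y t) x = 0) :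
    ∀ x t : ℝ,
      (deriv (fun s => u4 x s +
          ((K₁ + 6 * C111 * u1 x s) ^ ((3:ℝ)/2) - K₁ ^ ((3:ℝ)/2)) / (9 * C111)) t +
        Real.sqrt (K₁ + 6 * C111 * u1 x t) *
          deriv (fun y => u4 y t +
            ((K₁ + 6 * C111 * u1 y t) ^ ((3:ℝ)/2) - K₁ ^ ((3:ℝ)/2)) / (9 * C111)) x
        = 0) ∧
      (deriv (fun s => u4 x s -
          ((K₁ + 6 * C111 * u1 x s) ^ ((3:ℝ)/2) - K₁ ^ ((3:ℝ)/2)) / (9 * C111)) t -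
        Real.sqrt (K₁ + 6 * C111 * u1 x t) *
          deriv (fun y => u4 y t -
            ((K₁ + 6 * C111 * u1 y t) ^ ((3:ℝ)/2) - K₁ ^ ((3:ℝ)/2)) / (9 * C111)) x
        = 0) :=
  riemann_invariant_transport_general K₁ C111 hC u1 u4 hu1t hu1x hu4t hu4x hpos hpde1 hpde2
end

section
/- Let K > 0, C ≠ 0 and f̃ be real numbers, and suppose Z > 0 satisfies 3Z⁴ + 4Z³ = 3K² + 4K^{3/2} + 72C·f̃. Define g = (Z³ − K^{3/2})/(9C) − f̃. Then K² + 12C·(f̃ − g) = Z⁴ ≥ 0 and K^{3/2} + 9C·(f̃ + g) = ( K² + 12C·(f̃ − g) )^{3/4}. -/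
/-! The reflected amplitude is chosen so that the left-hand side of the second jump condition
is exactly `Z³`; the quartic for `Z` then says `K² + 12C(f̃ − g) = Z⁴`, and the condition reduces
to `Z³ = (Z⁴)^{3/4}`, which holds because `Z ≥ 0`. -/

namespace JumpCondition

/-- The reflected amplitude `g` for incident data `f`, written with `a = K^{3/2}`. -/
noncomputable def reflectedAmplitude (a C f Z : ℝ) : ℝ := (Z ^ 3 - a) / (9 * C) - f

theorem add_nine_mul_add_reflectedAmplitude {a C f : ℝ} (Z : ℝ) (hC : C ≠ 0) :
    a + 9 * C * (f + reflectedAmplitude a C f Z) = Z ^ 3 := by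
  unfold reflectedAmplitude
  field_simp
  ring

theorem add_twelve_mul_sub_reflectedAmplitude {a b C f Z : ℝ} (hC : C ≠ 0)
    (hZ : 3 * Z ^ 4 + 4 * Z ^ 3 = 3 * b + 4 * a + 72 * C * f) :
    b + 12 * C * (f - reflectedAmplitude a C f Z) = Z ^ 4 := by
  unfold reflectedAmplitude
  field_simp
  linear_combination (-3) * hZ

end JumpCondition

theorem Real.pow_rpow_div_natCast {x : ℝ} (hx : 0 ≤ x) (m : ℕ) {n : ℕ} (hn : n ≠ 0) :
    (x ^ n) ^ ((m : ℝ) / n) = x ^ m := by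
  rw [div_eq_mul_inv, mul_comm, Real.rpow_mul (pow_nonneg hx n),
    Real.pow_rpow_inv_natCast hx hn, Real.rpow_natCast]

open JumpCondition in
theorem jump_condition_solution_general
    (K C ftil Z : ℝ) (hC : C ≠ 0) (hZ : 0 < Z)
    (heq : 3 * Z ^ 4 + 4 * Z ^ 3 = 3 * K ^ 2 + 4 * K ^ ((3:ℝ)/2) + 72 * C * ftil) :
    let g := (Z ^ 3 - K ^ ((3:ℝ)/2)) / (9 * C) - ftil
    K ^ 2 + 12 * C * (ftil - g) = Z ^ 4 ∧ (0:ℝ) ≤ Z ^ 4 ∧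
      K ^ ((3:ℝ)/2) + 9 * C * (ftil + g) =
        (K ^ 2 + 12 * C * (ftil - g)) ^ ((3:ℝ)/4) := by
  intro g
  have hZ4 : K ^ 2 + 12 * C * (ftil - g) = Z ^ 4 :=
    add_twelve_mul_sub_reflectedAmplitude hC heq
  have hZ3 : K ^ ((3:ℝ)/2) + 9 * C * (ftil + g) = Z ^ 3 :=
    add_nine_mul_add_reflectedAmplitude Z hC
  refine ⟨hZ4, by positivity, ?_⟩
  rw [hZ4, hZ3]
  exact_mod_cast (Real.pow_rpow_div_natCast hZ.le 3 four_ne_zero).symm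

/-- Solution of the boundary (jump-condition) system (4.59) for the reflected
wave at the vacuum–crystal interface in the decoupled case. -/
theorem jump_condition_solution
    (K C ftil Z : ℝ) (hK : 0 < K) (hC : C ≠ 0) (hZ : 0 < Z)
    (heq : 3 * Z ^ 4 + 4 * Z ^ 3 = 3 * K ^ 2 + 4 * K ^ ((3:ℝ)/2) + 72 * C * ftil) :
    let g := (Z ^ 3 - K ^ ((3:ℝ)/2)) / (9 * C) - ftil
    K ^ 2 + 12 * C * (ftil - g) = Z ^ 4 ∧ (0:ℝ) ≤ Z ^ 4 ∧
      K ^ ((3:ℝ)/2) + 9 * C * (ftil + g) =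
        (K ^ 2 + 12 * C * (ftil - g)) ^ ((3:ℝ)/4) :=
  jump_condition_solution_general K C ftil Z hC hZ heq
end
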